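/- arXiv:1104.2760 — 5 statements merged into one kernel-verified Lean document; each statement's English description precedes it below -/
import Mathlib

section
/- Let V be a real inner product space and let u_1, u_2, v_0 ∈ V with v_0 ≠ 0 and dim(span{u_1, u_2, v_0}) ≥ 2. Then there exist real numbers α > 0, γ_1, γ_2 such that the vectors v_1 := (u_1 + γ_1 v_0)/α and v_2 := (u_2 + γ_2 v_0)/α satisfy |v_1|^2 = |v_2|^2 = 1 and ⟨v_1, v_2⟩ = 0. -/
/-!
Write `uᵢ = wᵢ + cᵢ v₀` with `wᵢ ⊥ v₀`; then `uᵢ + γᵢ v₀ = wᵢ + tᵢ v₀` with `tᵢ = γᵢ + cᵢ`, and the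
Gram matrix of these two vectors is `G + ‖v₀‖² t tᵀ`, where `G` is the Gram matrix of `w₁, w₂`.
Taking `A` to be the largest eigenvalue of `G`, the matrix `A • 1 - G` is positive semidefinite of
rank at most one, hence of the form `‖v₀‖² t tᵀ`; this `t` makes the two vectors orthogonal of
common squared length `A`. The dimension hypothesis says `w₁, w₂` are not both zero, so `A > 0`,
and dividing by `√A` normalises them.
-/

open scoped InnerProductSpace

lemma exists_sq_eq_sq_eq_mul_eq {p r q : ℝ} (hp : 0 ≤ p) (hr : 0 ≤ r) (h : p * r = q ^ 2) :
    ∃ x y : ℝ, x ^ 2 = p ∧ y ^ 2 = r ∧ x * y = q := by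
  rcases hp.eq_or_lt with rfl | hp
  · exact ⟨0, √r, by simp, Real.sq_sqrt hr, by nlinarith⟩
  · refine ⟨√p, q / √p, Real.sq_sqrt hp.le, ?_, ?_⟩
    · rw [div_pow, Real.sq_sqrt hp.le, ← h]
      field_simp
    · field_simp [(Real.sqrt_pos.mpr hp).ne']

lemma exists_add_sq_mul_eq_add_mul_mul_eq_zero {a b c d : ℝ} (hab : 0 < a ∨ 0 < b) (hd : 0 < d) :
    ∃ t₁ t₂ A : ℝ, 0 < A ∧ a + t₁ ^ 2 * d = A ∧ b + t₂ ^ 2 * d = A ∧ c + t₁ * t₂ * d = 0 := by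
  -- `A` is the largest eigenvalue of the symmetric matrix `!![a, c; c, b]`.
  set R := √((a - b) ^ 2 + 4 * c ^ 2)
  have hR : R ^ 2 = (a - b) ^ 2 + 4 * c ^ 2 := Real.sq_sqrt (by positivity)
  have habs : |a - b| ≤ R := Real.abs_le_sqrt (by nlinarith)
  set A := (a + b + R) / 2
  have ha : a ≤ A := show a ≤ (a + b + R) / 2 by linarith [le_abs_self (a - b)]
  have hb : b ≤ A := show b ≤ (a + b + R) / 2 by linarith [neg_abs_le (a - b)]
  obtain ⟨x, y, hx, hy, hxy⟩ := exists_sq_eq_sq_eq_mul_eq (div_nonneg (sub_nonneg.mpr ha) hd.le)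
    (div_nonneg (sub_nonneg.mpr hb) hd.le) (q := -c / d) (by field_simp; linear_combination hR / 4)
  refine ⟨x, y, A, by rcases hab with h | h <;> linarith, ?_, ?_, ?_⟩
  · rw [hx]; field_simp; ring
  · rw [hy]; field_simp; ring
  · rw [hxy]; field_simp; ring

lemma finrank_span_triple_le_one {K M : Type*} [DivisionRing K] [AddCommGroup M] [Module K M]
    {u₁ u₂ v : M} (h₁ : u₁ ∈ K ∙ v) (h₂ : u₂ ∈ K ∙ v) :
    Module.finrank K (Submodule.span K ({u₁, u₂, v} : Set M)) ≤ 1 := by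
  have hle : Submodule.span K ({u₁, u₂, v} : Set M) ≤ K ∙ v := by
    rw [Submodule.span_le]
    rintro x (rfl | rfl | rfl)
    exacts [h₁, h₂, Submodule.mem_span_singleton_self x]
  calc Module.finrank K (Submodule.span K ({u₁, u₂, v} : Set M))
      ≤ Module.finrank K (K ∙ v) := Submodule.finrank_mono hle
    _ ≤ 1 := (finrank_span_le_card ({v} : Set M)).trans (by simp)

section InnerProductSpace

variable {V : Type*} [NormedAddCommGroup V] [InnerProductSpace ℝ V]

lemma exists_eq_add_smul_of_inner_eq_zero (v u : V) :
    ∃ (w : V) (c : ℝ), ⟪v, w⟫_ℝ = 0 ∧ u = w + c • v := by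
  obtain ⟨y, hy, w, hw, rfl⟩ := (ℝ ∙ v).exists_add_mem_mem_orthogonal u
  obtain ⟨c, rfl⟩ := Submodule.mem_span_singleton.mp hy
  exact ⟨w, c, Submodule.mem_orthogonal_singleton_iff_inner_right.mp hw, add_comm _ _⟩

lemma inner_add_smul_add_smul_of_inner_eq_zero {v w₁ w₂ : V} (h₁ : ⟪v, w₁⟫_ℝ = 0)
    (h₂ : ⟪v, w₂⟫_ℝ = 0) (t₁ t₂ : ℝ) :
    ⟪w₁ + t₁ • v, w₂ + t₂ • v⟫_ℝ = ⟪w₁, w₂⟫_ℝ + t₁ * t₂ * ‖v‖ ^ 2 := by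
  simp only [inner_add_left, inner_add_right, real_inner_smul_left, real_inner_smul_right,
    real_inner_comm v w₁, h₁, h₂, real_inner_self_eq_norm_sq]
  ring

lemma exists_norm_sq_eq_inner_eq_zero_add_smul {v w₁ w₂ : V} (hv : v ≠ 0) (h₁ : ⟪v, w₁⟫_ℝ = 0)
    (h₂ : ⟪v, w₂⟫_ℝ = 0) (hw : w₁ ≠ 0 ∨ w₂ ≠ 0) :
    ∃ t₁ t₂ A : ℝ, 0 < A ∧ ‖w₁ + t₁ • v‖ ^ 2 = A ∧ ‖w₂ + t₂ • v‖ ^ 2 = A ∧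
      ⟪w₁ + t₁ • v, w₂ + t₂ • v⟫_ℝ = 0 := by
  have hpos {w : V} (hw : w ≠ 0) : 0 < ‖w‖ ^ 2 := pow_pos (norm_pos_iff.mpr hw) 2
  obtain ⟨t₁, t₂, A, hA, ht₁, ht₂, ht⟩ :=
    exists_add_sq_mul_eq_add_mul_mul_eq_zero (c := ⟪w₁, w₂⟫_ℝ) (hw.imp hpos hpos) (hpos hv)
  refine ⟨t₁, t₂, A, hA, ?_, ?_, ?_⟩
  · rw [← real_inner_self_eq_norm_sq, inner_add_smul_add_smul_of_inner_eq_zero h₁ h₁,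
      real_inner_self_eq_norm_sq, ← ht₁]
    ring
  · rw [← real_inner_self_eq_norm_sq, inner_add_smul_add_smul_of_inner_eq_zero h₂ h₂,
      real_inner_self_eq_norm_sq, ← ht₂]
    ring
  · rw [inner_add_smul_add_smul_of_inner_eq_zero h₁ h₂, ht]

lemma norm_inv_sqrt_smul_sq {A : ℝ} (hA : 0 ≤ A) (x : V) : ‖(√A)⁻¹ • x‖ ^ 2 = ‖x‖ ^ 2 / A := by
  rw [norm_smul, mul_pow, norm_inv, Real.norm_eq_abs, inv_pow, sq_abs, Real.sq_sqrt hA,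
    div_eq_inv_mul]

end InnerProductSpace

theorem stmt_1 {V : Type*} [NormedAddCommGroup V] [InnerProductSpace ℝ V]
    (u₁ u₂ v₀ : V) (hv₀ : v₀ ≠ 0)
    (hdim : 2 ≤ Module.finrank ℝ (Submodule.span ℝ ({u₁, u₂, v₀} : Set V))) :
    ∃ (α γ₁ γ₂ : ℝ), 0 < α ∧
      ‖α⁻¹ • (u₁ + γ₁ • v₀)‖ ^ 2 = 1 ∧
      ‖α⁻¹ • (u₂ + γ₂ • v₀)‖ ^ 2 = 1 ∧
      ⟪α⁻¹ • (u₁ + γ₁ • v₀), α⁻¹ • (u₂ + γ₂ • v₀)⟫_ℝ = 0 := by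
  obtain ⟨w₁, c₁, h₁, rfl⟩ := exists_eq_add_smul_of_inner_eq_zero v₀ u₁
  obtain ⟨w₂, c₂, h₂, rfl⟩ := exists_eq_add_smul_of_inner_eq_zero v₀ u₂
  have hw : w₁ ≠ 0 ∨ w₂ ≠ 0 := by
    by_contra! ⟨rfl, rfl⟩
    have hmem (c : ℝ) : 0 + c • v₀ ∈ ℝ ∙ v₀ := by
      simpa using Submodule.smul_mem _ c (Submodule.mem_span_singleton_self v₀)
    have := finrank_span_triple_le_one (hmem c₁) (hmem c₂)
    omega
  obtain ⟨t₁, t₂, A, hA, hn₁, hn₂, hi⟩ := exists_norm_sq_eq_inner_eq_zero_add_smul hv₀ h₁ h₂ hw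
  have shift (w : V) (c t : ℝ) : w + c • v₀ + (t - c) • v₀ = w + t • v₀ := by module
  refine ⟨√A, t₁ - c₁, t₂ - c₂, Real.sqrt_pos.mpr hA, ?_, ?_, ?_⟩
  · rw [shift, norm_inv_sqrt_smul_sq hA.le, hn₁, div_self hA.ne']
  · rw [shift, norm_inv_sqrt_smul_sq hA.le, hn₂, div_self hA.ne']
  · rw [shift, shift, real_inner_smul_left, real_inner_smul_right, hi, mul_zero, mul_zero]
end

section
/- Let V be a finite-dimensional real inner product space, v_0 ∈ V with v_0 ≠ 0, E ⊆ {x ∈ V : ⟨x, v_0⟩ = 1}, and u_1, u_2 ∈ V not both scalar multiples of v_0. Define Φ : E → ℂ by Φ(x) = ⟨x, u_1⟩ + i⟨x, u_2⟩. Then there exist a rank-2 orthogonal projection π : V → V with range V_0, a real-linear isometry θ : V_0 → ℂ, a real number α > 0 and a complex number w such that Φ(x) = α·θ(π(x)) − w for all x ∈ E; that is, Φ is an orthogonal projection followed by a similarity transformation (dilation and translation). -/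
/-!
Subtracting suitable multiples of `v₀` from `u₁` and `u₂` does not change `Φ` on `E` beyond a
constant, so it suffices to find `c₁, c₂` making `u₁ - c₁ v₀` and `u₂ - c₂ v₀` orthogonal and of
equal length; normalising them then gives `v₁, v₂` and `α`. Both conditions together say that
`Q(w₁, w₂) = ‖w₁‖² - ‖w₂‖² + 2i⟪w₁, w₂⟫` vanishes, and `Q(u₁ - c₁ v₀, u₂ - c₂ v₀)` is a complex
quadratic polynomial in `c₁ + i c₂` with leading coefficient `‖v₀‖² ≠ 0`, which has a root in `ℂ`.
-/

open scoped InnerProductSpace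

section

variable {V : Type*} [NormedAddCommGroup V] [InnerProductSpace ℝ V]

/-- The complex-bilinear extension of the inner product, evaluated at `w₁ + i w₂` twice. -/
noncomputable def complexGram (w₁ w₂ : V) : ℂ := ⟨‖w₁‖ ^ 2 - ‖w₂‖ ^ 2, 2 * ⟪w₁, w₂⟫_ℝ⟩

theorem complexGram_eq_zero_iff {w₁ w₂ : V} :
    complexGram w₁ w₂ = 0 ↔ ⟪w₁, w₂⟫_ℝ = 0 ∧ ‖w₁‖ = ‖w₂‖ := by
  simp only [complexGram, Complex.ext_iff, Complex.zero_re, Complex.zero_im, sub_eq_zero,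
    mul_eq_zero, two_ne_zero, false_or,
    sq_eq_sq₀ (norm_nonneg w₁) (norm_nonneg w₂)]
  exact and_comm

theorem complexGram_sub_smul (u₁ u₂ v : V) (c₁ c₂ : ℝ) :
    complexGram (u₁ - c₁ • v) (u₂ - c₂ • v) =
      (‖v‖ ^ 2 : ℝ) * (⟨c₁, c₂⟩ * ⟨c₁, c₂⟩) + -2 * ⟨⟪u₁, v⟫_ℝ, ⟪u₂, v⟫_ℝ⟩ * ⟨c₁, c₂⟩ +
        complexGram u₁ u₂ := by
  simp only [complexGram, Complex.ext_iff, Complex.add_re, Complex.add_im, Complex.mul_re,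
    Complex.mul_im, Complex.ofReal_re, Complex.ofReal_im, Complex.neg_re, Complex.neg_im,
    Complex.re_ofNat, Complex.im_ofNat, norm_sub_sq_real, inner_sub_left, inner_sub_right,
    real_inner_smul_left, real_inner_smul_right, norm_smul, Real.norm_eq_abs, mul_pow, sq_abs,
    real_inner_comm v, real_inner_self_eq_norm_sq]
  constructor <;> ring

theorem exists_inner_eq_zero_norm_eq_sub_smul (u₁ u₂ : V) {v : V} (hv : v ≠ 0) :
    ∃ c₁ c₂ : ℝ, ⟪u₁ - c₁ • v, u₂ - c₂ • v⟫_ℝ = 0 ∧ ‖u₁ - c₁ • v‖ = ‖u₂ - c₂ • v‖ := by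
  have hv2 : ((‖v‖ ^ 2 : ℝ) : ℂ) ≠ 0 := by exact_mod_cast pow_ne_zero 2 (norm_ne_zero_iff.mpr hv)
  obtain ⟨ζ, hζ⟩ := exists_quadratic_eq_zero hv2 (IsAlgClosed.exists_eq_mul_self _)
  refine ⟨ζ.re, ζ.im, complexGram_eq_zero_iff.mp ?_⟩
  rwa [complexGram_sub_smul]

theorem exists_norm_eq_one_smul_of_inner_eq_zero {w₁ w₂ : V} (h₀ : ⟪w₁, w₂⟫_ℝ = 0)
    (hnorm : ‖w₁‖ = ‖w₂‖) (hw₁ : w₁ ≠ 0) :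
    ∃ (v₁ v₂ : V) (α : ℝ), ‖v₁‖ = 1 ∧ ‖v₂‖ = 1 ∧ ⟪v₁, v₂⟫_ℝ = 0 ∧ 0 < α ∧
      w₁ = α • v₁ ∧ w₂ = α • v₂ := by
  have hα : 0 < ‖w₁‖ := norm_pos_iff.mpr hw₁
  refine ⟨‖w₁‖⁻¹ • w₁, ‖w₁‖⁻¹ • w₂, ‖w₁‖, ?_, ?_, ?_, hα, ?_, ?_⟩
  · rw [norm_smul, norm_inv, norm_norm, inv_mul_cancel₀ hα.ne']
  · rw [norm_smul, norm_inv, norm_norm, hnorm, inv_mul_cancel₀ (hnorm ▸ hα.ne')]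
  · rw [real_inner_smul_left, real_inner_smul_right, h₀, mul_zero, mul_zero]
  · rw [smul_inv_smul₀ hα.ne']
  · rw [smul_inv_smul₀ hα.ne']

theorem exists_orthonormal_smul_add_smul (u₁ u₂ : V) {v : V} (hv : v ≠ 0)
    (hu : ¬ ((∃ c : ℝ, u₁ = c • v) ∧ (∃ c : ℝ, u₂ = c • v))) :
    ∃ (v₁ v₂ : V) (α c₁ c₂ : ℝ), ‖v₁‖ = 1 ∧ ‖v₂‖ = 1 ∧ ⟪v₁, v₂⟫_ℝ = 0 ∧ 0 < α ∧
      u₁ = α • v₁ + c₁ • v ∧ u₂ = α • v₂ + c₂ • v := by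
  obtain ⟨c₁, c₂, h₀, hnorm⟩ := exists_inner_eq_zero_norm_eq_sub_smul u₁ u₂ hv
  have hw₁ : u₁ - c₁ • v ≠ 0 := by
    intro h
    rw [h, norm_zero, eq_comm, norm_eq_zero] at hnorm
    exact hu ⟨⟨c₁, sub_eq_zero.mp h⟩, ⟨c₂, sub_eq_zero.mp hnorm⟩⟩
  obtain ⟨v₁, v₂, α, hv₁, hv₂, h₁₂, hα, hαv₁, hαv₂⟩ :=
    exists_norm_eq_one_smul_of_inner_eq_zero h₀ hnorm hw₁
  exact ⟨v₁, v₂, α, c₁, c₂, hv₁, hv₂, h₁₂, hα, by rw [← hαv₁, sub_add_cancel],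
    by rw [← hαv₂, sub_add_cancel]⟩

end

theorem stmt_2_general {V : Type*} [NormedAddCommGroup V] [InnerProductSpace ℝ V]
    (v₀ : V) (hv₀ : v₀ ≠ 0) (E : Set V) (hE : E ⊆ {x : V | ⟪x, v₀⟫_ℝ = 1})
    (u₁ u₂ : V)
    (hu : ¬ ((∃ c : ℝ, u₁ = c • v₀) ∧ (∃ c : ℝ, u₂ = c • v₀))) :
    ∃ (v₁ v₂ : V) (α : ℝ) (w : ℂ),
      ‖v₁‖ = 1 ∧ ‖v₂‖ = 1 ∧ ⟪v₁, v₂⟫_ℝ = 0 ∧ 0 < α ∧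
      ∀ x ∈ E,
        (⟪x, u₁⟫_ℝ : ℂ) + (⟪x, u₂⟫_ℝ : ℂ) * Complex.I =
          (α : ℂ) * ((⟪x, v₁⟫_ℝ : ℂ) + (⟪x, v₂⟫_ℝ : ℂ) * Complex.I) - w := by
  obtain ⟨v₁, v₂, α, c₁, c₂, hv₁, hv₂, h₁₂, hα, rfl, rfl⟩ :=
    exists_orthonormal_smul_add_smul u₁ u₂ hv₀ hu
  refine ⟨v₁, v₂, α, -(c₁ + c₂ * Complex.I), hv₁, hv₂, h₁₂, hα, fun x hx => ?_⟩
  have hxv₀ : ⟪x, v₀⟫_ℝ = 1 := hE hx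
  simp only [inner_add_right, real_inner_smul_right, hxv₀]
  push_cast
  ring

theorem stmt_2 {V : Type*} [NormedAddCommGroup V] [InnerProductSpace ℝ V]
    [FiniteDimensional ℝ V]
    (v₀ : V) (hv₀ : v₀ ≠ 0) (E : Set V) (hE : E ⊆ {x : V | ⟪x, v₀⟫_ℝ = 1})
    (u₁ u₂ : V)
    (hu : ¬ ((∃ c : ℝ, u₁ = c • v₀) ∧ (∃ c : ℝ, u₂ = c • v₀))) :
    ∃ (v₁ v₂ : V) (α : ℝ) (w : ℂ),
      ‖v₁‖ = 1 ∧ ‖v₂‖ = 1 ∧ ⟪v₁, v₂⟫_ℝ = 0 ∧ 0 < α ∧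
      ∀ x ∈ E,
        (⟪x, u₁⟫_ℝ : ℂ) + (⟪x, u₂⟫_ℝ : ℂ) * Complex.I =
          (α : ℂ) * ((⟪x, v₁⟫_ℝ : ℂ) + (⟪x, v₂⟫_ℝ : ℂ) * Complex.I) - w :=
  stmt_2_general v₀ hv₀ E hE u₁ u₂ hu
end

section
/- Let A be a normal N×N complex matrix that is not a scalar multiple of the identity. Then there exist a rank-2 orthogonal projection π of ℝ^N (with the standard inner product), a real-linear isometry θ from the range of π onto ℂ, a real number α > 0 and a complex number w such that the numerical range satisfies W(A) = {α·θ(π(t)) − w : t ∈ Δ_{N-1}}. In other words, W(A) is the image of an orthogonal projection of the regular probability simplex Δ_{N-1} onto a two-plane, followed by a similarity transformation (dilation and translation) of the plane. -/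
/-!
STATEMENT 3: For a normal N×N complex matrix A which is not a scalar multiple of
the identity, the numerical range W(A) is the image of the orthogonal projection
of the probability simplex Δ_{N-1} ⊂ ℝ^N onto a two-plane (spanned by an
orthonormal pair v₁, v₂, the projection being t ↦ ⟪t,v₁⟫v₁ + ⟪t,v₂⟫v₂,
identified with ℂ via θ(a₁v₁ + a₂v₂) = a₁ + i·a₂), followed by a similarity
transformation z ↦ α·z − w with α > 0.
-/

open Matrix
open scoped InnerProductSpace

noncomputable section

/-- The numerical range W(A) = {⟨ψ, Aψ⟩ : ‖ψ‖ = 1}. -/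
def numericalRange {N : ℕ} (A : Matrix (Fin N) (Fin N) ℂ) : Set ℂ :=
  {z | ∃ ψ : EuclideanSpace ℂ (Fin N), ‖ψ‖ = 1 ∧ z = ⟪ψ, Matrix.toEuclideanLin A ψ⟫_ℂ}

/-- The probability simplex Δ_{N-1} = {t ∈ ℝ^N : tᵢ ≥ 0, ∑ tᵢ = 1}. -/
def probSimplex (N : ℕ) : Set (EuclideanSpace ℝ (Fin N)) :=
  {t | (∀ i, 0 ≤ t i) ∧ ∑ i, t i = 1}

/-! Diagonalise the normal matrix `A` in an orthonormal eigenbasis with eigenvalues `μⱼ`; then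
`⟪ψ, Aψ⟫ = ∑ |⟪bⱼ, ψ⟫|² μⱼ`, so `W(A)` is the image of the simplex under `t ↦ ∑ tⱼ μⱼ`.
Since `∑ tⱼ = 1`, shifting all `μⱼ` by a constant `ζ` only translates this image, and `ζ` can be
chosen as a root of the quadratic `∑ (μⱼ + ζ)² = 0`. The real and imaginary parts `u`, `v` of
`μ + ζ` are then orthogonal vectors of equal length, so `∑ tⱼ (μⱼ + ζ) = ⟪t, u⟫ + i ⟪t, v⟫` is
`‖u‖` times the projection of `t` onto the plane spanned by `u / ‖u‖` and `v / ‖u‖`. Finally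
`u ≠ 0`, for otherwise `v = 0` and all eigenvalues equal `-ζ`, making `A` scalar. -/

theorem OrthogonalFamily.exists_orthonormalBasis_subordinate {𝕜 E ι : Type*} [RCLike 𝕜]
    [NormedAddCommGroup E] [InnerProductSpace 𝕜 E] [FiniteDimensional 𝕜 E] [DecidableEq ι]
    {V : ι → Submodule 𝕜 E} (hV : OrthogonalFamily 𝕜 (fun i => V i) fun i => (V i).subtypeₗᵢ)
    (hV' : DirectSum.IsInternal V) {n : ℕ} (hn : Module.finrank 𝕜 E = n) :
    ∃ (b : OrthonormalBasis (Fin n) 𝕜 E) (f : Fin n → ι), ∀ a, b a ∈ V (f a) := by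
  let W : {i // V i ≠ ⊥} → Submodule 𝕜 E := fun i => V i
  have : Fintype {i // V i ≠ ⊥} := hV'.submodule_iSupIndep.fintypeNeBotOfFiniteDimensional
  have hW : OrthogonalFamily 𝕜 (fun i => W i) fun i => (W i).subtypeₗᵢ :=
    hV.comp Subtype.val_injective
  have hW' : DirectSum.IsInternal W := by
    rw [hW.isInternal_iff, iSup_ne_bot_subtype, hV'.submodule_iSup_eq_top,
      Submodule.top_orthogonal_eq_bot]
  exact ⟨hW'.subordinateOrthonormalBasis hn hW,
    fun a => (hW'.subordinateOrthonormalBasisIndex hn a hW).1,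
    fun a => hW'.subordinateOrthonormalBasis_subordinate hn a hW⟩

open Module.End ComplexStarModule in
/-- A joint eigenvector of the commuting self-adjoint operators `ℜ T` and `ℑ T` is an eigenvector
of `T = ℜ T + i ℑ T`. -/
theorem LinearMap.exists_orthonormalBasis_eigenvectors_of_isStarNormal {E : Type*}
    [NormedAddCommGroup E] [InnerProductSpace ℂ E] [FiniteDimensional ℂ E]
    (T : E →ₗ[ℂ] E) [IsStarNormal T] {n : ℕ} (hn : Module.finrank ℂ E = n) :
    ∃ (b : OrthonormalBasis (Fin n) ℂ E) (μ : Fin n → ℂ), ∀ j, T (b j) = μ j • b j := by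
  have hre : (ℜ T : E →ₗ[ℂ] E).IsSymmetric := (isSymmetric_iff_isSelfAdjoint _).mpr (ℜ T).2
  have him : (ℑ T : E →ₗ[ℂ] E).IsSymmetric := (isSymmetric_iff_isSelfAdjoint _).mpr (ℑ T).2
  obtain ⟨b, f, hbf⟩ :=
    (hre.orthogonalFamily_eigenspace_inf_eigenspace him).exists_orthonormalBasis_subordinate
      (hre.directSum_isInternal_of_commute him (Commute.realPart_imaginaryPart T)) hn
  refine ⟨b, fun j => (f j).2 + Complex.I * (f j).1, fun j => ?_⟩
  obtain ⟨hre_j, him_j⟩ := Submodule.mem_inf.mp (hbf j)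
  rw [mem_eigenspace_iff] at hre_j him_j
  conv_lhs => rw [← realPart_add_I_smul_imaginaryPart T]
  rw [LinearMap.add_apply, LinearMap.smul_apply, hre_j, him_j, add_smul, smul_smul]

theorem Matrix.isStarNormal_toEuclideanLin {n : Type*} [Fintype n] [DecidableEq n]
    {A : Matrix n n ℂ} (hA : A * Aᴴ = Aᴴ * A) : IsStarNormal (Matrix.toEuclideanLin A) :=
  ⟨by rw [commute_iff_eq, LinearMap.star_eq_adjoint, ← toEuclideanLin_conjTranspose_eq_adjoint,
    Module.End.mul_eq_comp, Module.End.mul_eq_comp, ← toLpLin_mul_same, ← toLpLin_mul_same, hA]⟩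

theorem Matrix.eq_smul_one_of_toEuclideanLin_apply {n : Type*} [Fintype n] [DecidableEq n]
    {A : Matrix n n ℂ} (b : OrthonormalBasis n ℂ (EuclideanSpace ℂ n)) {c : ℂ}
    (hb : ∀ j, Matrix.toEuclideanLin A (b j) = c • b j) : A = c • 1 :=
  (toLpLin 2 2).injective <| b.toBasis.ext fun j => by simpa using hb j

section EigenExpansion

variable {ι 𝕜 E : Type*} [Fintype ι] [RCLike 𝕜] [NormedAddCommGroup E] [InnerProductSpace 𝕜 E]

theorem OrthonormalBasis.inner_self_apply_eq_sum (b : OrthonormalBasis ι 𝕜 E) {T : E →ₗ[𝕜] E}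
    {μ : ι → 𝕜} (hT : ∀ j, T (b j) = μ j • b j) (ψ : E) :
    ⟪ψ, T ψ⟫_𝕜 = ∑ j, (‖⟪b j, ψ⟫_𝕜‖ ^ 2 : ℝ) * μ j := by
  have hTψ : T ψ = ∑ j, (⟪b j, ψ⟫_𝕜 * μ j) • b j := by
    conv_lhs => rw [← b.sum_repr' ψ]
    simp only [map_sum, map_smul, hT, smul_smul]
  rw [hTψ, inner_sum]
  refine Finset.sum_congr rfl fun j _ => ?_
  rw [inner_smul_right, ← inner_conj_symm ψ, mul_right_comm, RCLike.mul_conj]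
  norm_cast

theorem OrthonormalBasis.exists_norm_inner_sq_eq (b : OrthonormalBasis ι 𝕜 E) {t : ι → ℝ}
    (ht : ∀ j, 0 ≤ t j) : ∃ ψ : E, ∀ j, ‖⟪b j, ψ⟫_𝕜‖ ^ 2 = t j := by
  refine ⟨b.repr.symm (WithLp.toLp 2 fun j => (√(t j) : 𝕜)), fun j => ?_⟩
  rw [← b.repr_apply_apply, LinearIsometryEquiv.apply_symm_apply]
  simp [ht j]

end EigenExpansion

theorem numericalRange_eq_image_probSimplex {N : ℕ} {A : Matrix (Fin N) (Fin N) ℂ}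
    (b : OrthonormalBasis (Fin N) ℂ (EuclideanSpace ℂ (Fin N))) {μ : Fin N → ℂ}
    (hb : ∀ j, Matrix.toEuclideanLin A (b j) = μ j • b j) :
    numericalRange A = (fun t => ∑ j, (t j : ℂ) * μ j) '' probSimplex N := by
  ext z
  constructor
  · rintro ⟨ψ, hψ, rfl⟩
    refine ⟨WithLp.toLp 2 fun j => ‖⟪b j, ψ⟫_ℂ‖ ^ 2, ⟨fun j => by positivity, ?_⟩,
      (b.inner_self_apply_eq_sum hb ψ).symm⟩
    simp [b.sum_sq_norm_inner_right, hψ]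
  · rintro ⟨t, ⟨ht0, ht1⟩, rfl⟩
    obtain ⟨ψ, hψ⟩ := b.exists_norm_inner_sq_eq ht0
    refine ⟨ψ, ?_, by simp [b.inner_self_apply_eq_sum hb ψ, hψ]⟩
    rw [← pow_eq_one_iff_of_nonneg (norm_nonneg ψ) two_ne_zero, ← b.sum_sq_norm_inner_right]
    simpa [hψ] using ht1

section RealImaginaryParts

variable {ι : Type*} (z : ι → ℂ)

def reVec : EuclideanSpace ℝ ι := WithLp.toLp 2 fun j => (z j).re

def imVec : EuclideanSpace ℝ ι := WithLp.toLp 2 fun j => (z j).im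

@[simp] theorem reVec_apply (j : ι) : reVec z j = (z j).re := rfl

@[simp] theorem imVec_apply (j : ι) : imVec z j = (z j).im := rfl

variable [Fintype ι]

theorem sum_ofReal_mul_eq_inner_reVec_add_inner_imVec_mul_I (t : EuclideanSpace ℝ ι) :
    ∑ j, (t j : ℂ) * z j = ⟪t, reVec z⟫_ℝ + ⟪t, imVec z⟫_ℝ * Complex.I := by
  apply Complex.ext <;> simp [PiLp.inner_apply, Complex.re_sum, Complex.im_sum, mul_comm]

theorem sum_sq_eq_norm_reVec_sq_sub_norm_imVec_sq :
    ∑ j, z j ^ 2 = (‖reVec z‖ ^ 2 - ‖imVec z‖ ^ 2 : ℝ) +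
      (2 * ⟪reVec z, imVec z⟫_ℝ : ℝ) * Complex.I := by
  apply Complex.ext
  · rw [EuclideanSpace.norm_sq_eq, EuclideanSpace.norm_sq_eq]
    simp [Complex.re_sum, pow_two, Finset.sum_sub_distrib]
  · simp [PiLp.inner_apply, Complex.im_sum, pow_two, Finset.mul_sum, mul_comm, mul_two]

variable {z}

theorem norm_reVec_eq_norm_imVec_of_sum_sq_eq_zero (h : ∑ j, z j ^ 2 = 0) :
    ‖reVec z‖ = ‖imVec z‖ := by
  have := congrArg Complex.re (sum_sq_eq_norm_reVec_sq_sub_norm_imVec_sq z)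
  simp only [h, Complex.zero_re, Complex.add_re, Complex.ofReal_re, Complex.re_ofReal_mul,
    Complex.I_re, mul_zero, add_zero] at this
  exact (pow_left_inj₀ (norm_nonneg _) (norm_nonneg _) two_ne_zero).mp (by linarith)

theorem inner_reVec_imVec_eq_zero_of_sum_sq_eq_zero (h : ∑ j, z j ^ 2 = 0) :
    ⟪reVec z, imVec z⟫_ℝ = 0 := by
  have := congrArg Complex.im (sum_sq_eq_norm_reVec_sq_sub_norm_imVec_sq z)
  simp only [h, Complex.zero_im, Complex.add_im, Complex.ofReal_im, Complex.im_ofReal_mul,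
    Complex.I_im, mul_one, zero_add] at this
  linarith

end RealImaginaryParts

theorem exists_sum_add_sq_eq_zero {ι : Type*} [Fintype ι] [Nonempty ι] (μ : ι → ℂ) :
    ∃ ζ : ℂ, ∑ j, (μ j + ζ) ^ 2 = 0 := by
  have hcard : (Fintype.card ι : ℂ) ≠ 0 := Nat.cast_ne_zero.mpr Fintype.card_ne_zero
  obtain ⟨ζ, hζ⟩ := exists_quadratic_eq_zero hcard
    (IsAlgClosed.exists_eq_mul_self (discrim _ (2 * ∑ j, μ j) (∑ j, μ j ^ 2)))
  refine ⟨ζ, ?_⟩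
  rw [← hζ]
  simp only [add_sq, Finset.sum_add_distrib, Finset.sum_const, Finset.card_univ, nsmul_eq_mul,
    ← Finset.sum_mul, ← Finset.mul_sum]
  ring

open Complex in
theorem exists_orthonormal_similarity {ι : Type*} [Fintype ι] (μ : ι → ℂ)
    (hμ : ∀ c, ∃ j, μ j ≠ c) :
    ∃ (v₁ v₂ : EuclideanSpace ℝ ι) (α : ℝ) (w : ℂ),
      ‖v₁‖ = 1 ∧ ‖v₂‖ = 1 ∧ ⟪v₁, v₂⟫_ℝ = 0 ∧ 0 < α ∧
      ∀ t : EuclideanSpace ℝ ι, ∑ i, t i = 1 →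
        ∑ j, (t j : ℂ) * μ j = α * (⟪t, v₁⟫_ℝ + ⟪t, v₂⟫_ℝ * I) - w := by
  have : Nonempty ι := (hμ 0).nonempty
  obtain ⟨ζ, hζ⟩ := exists_sum_add_sq_eq_zero μ
  set z : ι → ℂ := fun j => μ j + ζ
  have hnorm := norm_reVec_eq_norm_imVec_of_sum_sq_eq_zero hζ
  have hu : reVec z ≠ 0 := by
    intro hu
    obtain ⟨j, hj⟩ := hμ (-ζ)
    have hv : imVec z = 0 := by rwa [← norm_eq_zero, ← hnorm, norm_eq_zero]
    have hzj : z j = 0 :=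
      Complex.ext (by simpa using congrArg (· j) hu) (by simpa using congrArg (· j) hv)
    exact hj (eq_neg_of_add_eq_zero_left hzj)
  have hα : 0 < ‖reVec z‖ := norm_pos_iff.mpr hu
  refine ⟨‖reVec z‖⁻¹ • reVec z, ‖reVec z‖⁻¹ • imVec z, ‖reVec z‖, ζ, norm_smul_inv_norm hu,
    ?_, ?_, hα, fun t ht => ?_⟩
  · rw [norm_smul, ← hnorm, norm_inv, norm_norm, inv_mul_cancel₀ hα.ne']
  · rw [inner_smul_left, inner_smul_right, inner_reVec_imVec_eq_zero_of_sum_sq_eq_zero hζ,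
      mul_zero, mul_zero]
  · have hsum : ∑ j, (t j : ℂ) * z j = ∑ j, (t j : ℂ) * μ j + ζ := by
      simp only [z, mul_add, Finset.sum_add_distrib, ← Finset.sum_mul, ← Complex.ofReal_sum, ht,
        Complex.ofReal_one, one_mul]
    rw [inner_smul_right, inner_smul_right, eq_sub_iff_add_eq, ← hsum,
      sum_ofReal_mul_eq_inner_reVec_add_inner_imVec_mul_I]
    have hα' : (‖reVec z‖ : ℂ) ≠ 0 := by exact_mod_cast hα.ne'
    push_cast
    field_simp

theorem stmt_3 {N : ℕ} (A : Matrix (Fin N) (Fin N) ℂ)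
    (hnormal : A * Aᴴ = Aᴴ * A)
    (hA : ∀ c : ℂ, A ≠ c • (1 : Matrix (Fin N) (Fin N) ℂ)) :
    ∃ (v₁ v₂ : EuclideanSpace ℝ (Fin N)) (α : ℝ) (w : ℂ),
      ‖v₁‖ = 1 ∧ ‖v₂‖ = 1 ∧ ⟪v₁, v₂⟫_ℝ = 0 ∧ 0 < α ∧
      numericalRange A =
        {z | ∃ t ∈ probSimplex N,
          z = (α : ℂ) * ((⟪t, v₁⟫_ℝ : ℂ) + (⟪t, v₂⟫_ℝ : ℂ) * Complex.I) - w} := by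
  have := Matrix.isStarNormal_toEuclideanLin hnormal
  obtain ⟨b, μ, hb⟩ :=
    (Matrix.toEuclideanLin A).exists_orthonormalBasis_eigenvectors_of_isStarNormal
      finrank_euclideanSpace_fin
  have hμ : ∀ c, ∃ j, μ j ≠ c := fun c => by
    by_contra! h
    exact hA c (Matrix.eq_smul_one_of_toEuclideanLin_apply b fun j => by rw [hb, h])
  obtain ⟨v₁, v₂, α, w, hv₁, hv₂, hv, hα, hsim⟩ := exists_orthonormal_similarity μ hμ
  refine ⟨v₁, v₂, α, w, hv₁, hv₂, hv, hα, ?_⟩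
  rw [numericalRange_eq_image_probSimplex b hb]
  ext z
  refine exists_congr fun t => and_congr_right fun ht => ?_
  rw [← hsim t ht.2]
  exact eq_comm
end
end

section
/- Let A be an N×N complex matrix that is not a scalar multiple of the identity. Consider the real vector space of Hermitian N×N matrices with the Hilbert–Schmidt inner product ⟨X, Y⟩ = Tr(XY). Then there exist a rank-2 orthogonal projection π of this space, a real-linear isometry θ from the range of π onto ℂ, a real number α > 0 and a complex number w such that the numerical range satisfies W(A) = {α·θ(π(ρ)) − w : ρ ∈ Q_N}. In other words, W(A) is the image of an orthogonal projection of the set Q_N of density matrices onto a two-plane, followed by a similarity transformation (dilation and translation) of the plane. -/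
/-!
STATEMENT 5: For an N×N complex matrix A which is not a scalar multiple of the
identity, the numerical range W(A) is the image of an orthogonal projection of
the set Q_N of density matrices (in the real space of Hermitian matrices with
the Hilbert–Schmidt inner product ⟨X,Y⟩ = Tr(XY)) onto a two-plane spanned by a
Hilbert–Schmidt orthonormal pair of Hermitian matrices V₁, V₂ (the projection
being ρ ↦ ⟨ρ,V₁⟩V₁ + ⟨ρ,V₂⟩V₂, identified with ℂ via
θ(a₁V₁ + a₂V₂) = a₁ + i·a₂, so θ(π ρ) = Tr(ρV₁) + i·Tr(ρV₂)), followed by a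
similarity transformation z ↦ α·z − w with α > 0.
-/

open Matrix
open scoped InnerProductSpace ComplexOrder

noncomputable section

/-!
By the Toeplitz–Hausdorff theorem `W(A)` is convex. Diagonalising a density matrix `ρ` exhibits
`Tr(ρA)` as a convex combination of values `⟪v, A v⟫` at unit eigenvectors, and pure states
`ψψ*` give every point of `W(A)`, so `W(A) = {Tr(ρA) : ρ ∈ Q_N}`.

Write the traceless part of `A` as `B + iC` with `B`, `C` Hermitian and traceless. As `Tr ρ = 1`,
replacing `B`, `C` by `B + s`, `C + t` only translates `Tr(ρA)`; since the identity is
Hilbert–Schmidt orthogonal to `B` and `C`, real `s`, `t` can be chosen to make `B + s` and `C + t`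
orthogonal of a common norm `α`, which is positive because `A` is not scalar. Then
`V₁ = (B + s)/α` and `V₂ = (C + t)/α`.
-/

open scoped ComplexStarModule

lemma Complex.exists_norm_eq_one_conj_mul_add_mul_im_eq_zero (a b : ℂ) :
    ∃ u : ℂ, ‖u‖ = 1 ∧ (starRingEnd ℂ u * a + u * b).im = 0 := by
  obtain ⟨c, hc, hcd⟩ := Complex.exists_norm_eq_mul_self (a - starRingEnd ℂ b)
  refine ⟨starRingEnd ℂ c, by rwa [Complex.norm_conj], ?_⟩
  have := congrArg Complex.im hcd
  simp only [Complex.ofReal_im, Complex.mul_im, Complex.sub_re, Complex.sub_im,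
    Complex.conj_re, Complex.conj_im] at this
  simp only [Complex.add_im, Complex.mul_im, Complex.conj_conj, Complex.conj_re, Complex.conj_im]
  linarith

namespace LinearMap

variable {E : Type*} [NormedAddCommGroup E] [InnerProductSpace ℂ E] (T : E →ₗ[ℂ] E)

def numericalRange : Set ℂ := {z | ∃ ψ : E, ‖ψ‖ = 1 ∧ z = ⟪ψ, T ψ⟫_ℂ}

lemma inner_map_self_div_norm_sq_mem_numericalRange {x : E} (hx : x ≠ 0) :
    ⟪x, T x⟫_ℂ / (‖x‖ : ℂ) ^ 2 ∈ T.numericalRange := by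
  refine ⟨((‖x‖⁻¹ : ℝ) : ℂ) • x, by exact_mod_cast norm_smul_inv_norm (𝕜 := ℂ) hx, ?_⟩
  rw [map_smul, inner_smul_left, inner_smul_right, Complex.conj_ofReal]
  push_cast
  ring

lemma smul_add_smul_ne_zero {φ ψ : E} (hφ : φ ≠ 0) (hTφ : ⟪φ, T φ⟫_ℂ = 0)
    (hTψ : ⟪ψ, T ψ⟫_ℂ ≠ 0) {a b : ℂ} (hab : a ≠ 0 ∨ b ≠ 0) : a • φ + b • ψ ≠ 0 := by
  intro h
  rcases eq_or_ne b 0 with rfl | hb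
  · simp_all
  have hψ : ψ = (-(a / b)) • φ := by
    rw [← inv_smul_smul₀ hb ψ, eq_neg_of_add_eq_zero_right h, smul_neg, smul_smul, neg_smul,
      div_eq_inv_mul]
  apply hTψ
  rw [hψ, map_smul, inner_smul_left, inner_smul_right, hTφ, mul_zero, mul_zero]

/-- By `him`, `⟪x, T x⟫` is real on the segment from `φ` to `ψ`; the intermediate value theorem
applied to `⟪x, T x⟫ / ‖x‖²` along it gives every value in `[0, 1]`. -/
lemma ofReal_mem_numericalRange_of_im_eq_zero {φ ψ : E} (hφ : φ ≠ 0) (hψ : ‖ψ‖ = 1)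
    (hTφ : ⟪φ, T φ⟫_ℂ = 0) (hTψ : ⟪ψ, T ψ⟫_ℂ = 1) (him : (⟪φ, T ψ⟫_ℂ + ⟪ψ, T φ⟫_ℂ).im = 0)
    {s : ℝ} (hs : s ∈ Set.Icc (0 : ℝ) 1) : (s : ℂ) ∈ T.numericalRange := by
  set x : ℝ → E := fun t ↦ ((1 - t : ℝ) : ℂ) • φ + (t : ℂ) • ψ
  have hx : ∀ t ∈ Set.Icc (0 : ℝ) 1, x t ≠ 0 := fun t ht ↦
    T.smul_add_smul_ne_zero hφ hTφ (by simp [hTψ]) <| by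
      rcases eq_or_ne t 0 with rfl | h
      · simp
      · exact Or.inr (by exact_mod_cast h)
  have hr : ⟪φ, T ψ⟫_ℂ + ⟪ψ, T φ⟫_ℂ = ((⟪φ, T ψ⟫_ℂ + ⟪ψ, T φ⟫_ℂ).re : ℂ) :=
    Complex.ext rfl (by simpa using him)
  have hq : ∀ t, ⟪x t, T (x t)⟫_ℂ = ((1 - t) * t * (⟪φ, T ψ⟫_ℂ + ⟪ψ, T φ⟫_ℂ).re + t ^ 2 : ℝ) := by
    intro t
    simp only [x, map_add, map_smul, inner_add_left, inner_add_right, inner_smul_left,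
      inner_smul_right, Complex.conj_ofReal, hTφ, hTψ]
    push_cast
    linear_combination ((1 - t : ℂ) * t) * hr
  set g : ℝ → ℝ := fun t ↦ ((1 - t) * t * (⟪φ, T ψ⟫_ℂ + ⟪ψ, T φ⟫_ℂ).re + t ^ 2) / ‖x t‖ ^ 2
  have hg : ContinuousOn g (Set.Icc 0 1) :=
    ContinuousOn.div (by fun_prop) (by fun_prop) fun t ht ↦
      pow_ne_zero 2 (norm_ne_zero_iff.2 (hx t ht))
  obtain ⟨t, ht, rfl⟩ : ∃ t ∈ Set.Icc (0 : ℝ) 1, g t = s :=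
    intermediate_value_Icc zero_le_one hg (by simpa [g, x, hψ] using hs)
  convert T.inner_map_self_div_norm_sq_mem_numericalRange (hx t ht) using 1
  simp only [g, hq]
  push_cast
  rfl

lemma ofReal_mem_numericalRange {ψ₁ ψ₂ : E} (hψ₁ : ‖ψ₁‖ = 1) (hψ₂ : ‖ψ₂‖ = 1)
    (hTψ₁ : ⟪ψ₁, T ψ₁⟫_ℂ = 0) (hTψ₂ : ⟪ψ₂, T ψ₂⟫_ℂ = 1) {s : ℝ} (hs : s ∈ Set.Icc (0 : ℝ) 1) :
    (s : ℂ) ∈ T.numericalRange := by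
  obtain ⟨u, hu, him⟩ :=
    Complex.exists_norm_eq_one_conj_mul_add_mul_im_eq_zero ⟪ψ₁, T ψ₂⟫_ℂ ⟪ψ₂, T ψ₁⟫_ℂ
  have hψ₁0 : ψ₁ ≠ 0 := by rintro rfl; simp at hψ₁
  have hu0 : u ≠ 0 := by rintro rfl; simp at hu
  refine T.ofReal_mem_numericalRange_of_im_eq_zero (φ := u • ψ₁) (smul_ne_zero hu0 hψ₁0) hψ₂
    ?_ hTψ₂ ?_ hs
  · simp [hTψ₁]
  · convert him using 1
    simp only [map_smul, inner_smul_left, inner_smul_right, Complex.add_im, Complex.mul_im,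
      Complex.conj_re, Complex.conj_im]

/-- **Toeplitz–Hausdorff theorem**. -/
theorem convex_numericalRange : Convex ℝ T.numericalRange := by
  refine convex_iff_segment_subset.2 ?_
  rintro _ ⟨ψ₁, hψ₁, rfl⟩ _ ⟨ψ₂, hψ₂, rfl⟩
  set z₁ := ⟪ψ₁, T ψ₁⟫_ℂ
  set z₂ := ⟪ψ₂, T ψ₂⟫_ℂ
  rcases eq_or_ne z₁ z₂ with h | h
  · rw [h, segment_same, Set.singleton_subset_iff]
    exact ⟨ψ₂, hψ₂, rfl⟩
  rw [segment_eq_image_lineMap]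
  rintro _ ⟨s, hs, rfl⟩
  have hz : z₂ - z₁ ≠ 0 := sub_ne_zero.2 h.symm
  set S : E →ₗ[ℂ] E := (z₂ - z₁)⁻¹ • (T - z₁ • LinearMap.id)
  have hS : ∀ ψ : E, ‖ψ‖ = 1 → ⟪ψ, S ψ⟫_ℂ = (⟪ψ, T ψ⟫_ℂ - z₁) / (z₂ - z₁) := fun ψ hψ ↦ by
    simp [S, inner_self_eq_norm_sq_to_K, hψ, div_eq_inv_mul]
  obtain ⟨χ, hχ, hsχ⟩ := S.ofReal_mem_numericalRange hψ₁ hψ₂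
    (by rw [hS _ hψ₁, sub_self, zero_div]) (by rw [hS _ hψ₂, div_self hz]) hs
  refine ⟨χ, hχ, ?_⟩
  rw [hS χ hχ, eq_div_iff hz] at hsχ
  rw [AffineMap.lineMap_apply, vsub_eq_sub, vadd_eq_add, Complex.real_smul]
  linear_combination hsχ

end LinearMap

namespace Matrix

variable {n : Type*} [Fintype n]

def densityMatrices : Set (Matrix n n ℂ) := {ρ | ρ.PosSemidef ∧ ρ.trace = 1}

lemma vecMulVec_mem_densityMatrices {ψ : EuclideanSpace ℂ n} (hψ : ‖ψ‖ = 1) :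
    vecMulVec ψ (star ψ) ∈ densityMatrices := by
  refine ⟨posSemidef_vecMulVec_self_star _, ?_⟩
  rw [trace_vecMulVec, ← EuclideanSpace.inner_eq_star_dotProduct, inner_self_eq_norm_sq_to_K, hψ]
  simp

variable [DecidableEq n]

lemma inner_toEuclideanLin_self (A : Matrix n n ℂ) (ψ : EuclideanSpace ℂ n) :
    ⟪ψ, toEuclideanLin A ψ⟫_ℂ = (vecMulVec ψ (star ψ) * A).trace := by
  rw [vecMulVec_mul, trace_vecMulVec, dotProduct_comm, ← dotProduct_mulVec,
    EuclideanSpace.inner_eq_star_dotProduct, dotProduct_comm]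
  rfl

lemma trace_toEuclideanLin (M : Matrix n n ℂ) :
    LinearMap.trace ℂ _ (toEuclideanLin M) = M.trace := by
  rw [toEuclideanLin, toLpLin_eq_toLin, trace_toLin_eq]

lemma trace_mul_mem_numericalRange {ρ : Matrix n n ℂ} (hρ : ρ ∈ densityMatrices)
    (A : Matrix n n ℂ) : (ρ * A).trace ∈ (toEuclideanLin A).numericalRange := by
  obtain ⟨hpsd, htr⟩ := hρ
  set v := hpsd.1.eigenvectorBasis
  have hρv : ∀ k, toEuclideanLin ρ (v k) = (hpsd.1.eigenvalues k : ℂ) • v k := fun k ↦ by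
    rw [toLpLin_apply, hpsd.1.mulVec_eigenvectorBasis, RCLike.real_smul_eq_coe_smul (K := ℂ)]
    rfl
  have hsum : (ρ * A).trace = ∑ k, hpsd.1.eigenvalues k • ⟪v k, toEuclideanLin A (v k)⟫_ℂ := by
    rw [trace_mul_comm, ← trace_toEuclideanLin, LinearMap.trace_eq_sum_inner _ v]
    simp [toLpLin_mul_same, hρv, Complex.real_smul]
  rw [hsum]
  refine (toEuclideanLin A).convex_numericalRange.sum_mem (fun k _ ↦ hpsd.eigenvalues_nonneg k)
    ?_ fun k _ ↦ ⟨v k, v.orthonormal.1 k, rfl⟩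
  have := hpsd.1.trace_eq_sum_eigenvalues
  rw [htr, ← RCLike.ofReal_sum] at this
  exact RCLike.ofReal_injective (this.symm.trans RCLike.ofReal_one.symm)

theorem numericalRange_eq_image_densityMatrices (A : Matrix n n ℂ) :
    (toEuclideanLin A).numericalRange = (fun ρ ↦ (ρ * A).trace) '' densityMatrices := by
  refine Set.Subset.antisymm ?_ ?_
  · rintro _ ⟨ψ, hψ, rfl⟩
    exact ⟨_, vecMulVec_mem_densityMatrices hψ, (inner_toEuclideanLin_self A ψ).symm⟩
  · rintro _ ⟨ρ, hρ, rfl⟩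
    exact trace_mul_mem_numericalRange hρ A

end Matrix

lemma Real.exists_add_mul_sq_eq_add_mul_sq {b c d n : ℝ} (hn : 0 < n) (hbc : 0 < b + c) :
    ∃ s t : ℝ, 0 < b + n * s ^ 2 ∧ b + n * s ^ 2 = c + n * t ^ 2 ∧ d + n * (s * t) = 0 := by
  -- `s + t i` is a square root of `((c - b) - 2 d i) / n`
  obtain ⟨ζ, hζ⟩ := IsAlgClosed.exists_pow_nat_eq (⟨(c - b) / n, -2 * d / n⟩ : ℂ) two_pos
  have hre := congrArg Complex.re hζ
  have him := congrArg Complex.im hζ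
  simp only [sq, Complex.mul_re, Complex.mul_im] at hre him
  field_simp at hre him
  refine ⟨ζ.re, ζ.im, ?_, by linarith, by linarith⟩
  nlinarith [mul_nonneg hn.le (sq_nonneg ζ.re), mul_nonneg hn.le (sq_nonneg ζ.im)]

namespace Matrix

lemma nonempty_of_ne {n α : Type*} {X Y : Matrix n n α} (h : X ≠ Y) : Nonempty n := by
  by_contra hn
  rw [not_nonempty_iff] at hn
  exact h (Subsingleton.elim _ _)

variable {n : Type*} [Fintype n]

lemma IsHermitian.ofReal_re_trace_mul {X Y : Matrix n n ℂ} (hX : X.IsHermitian)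
    (hY : Y.IsHermitian) : ((X * Y).trace.re : ℂ) = (X * Y).trace := by
  rw [← Complex.conj_eq_iff_re, starRingEnd_apply, ← trace_conjTranspose, conjTranspose_mul,
    hX.eq, hY.eq, trace_mul_comm]

lemma IsHermitian.re_trace_mul_self_nonneg {X : Matrix n n ℂ} (hX : X.IsHermitian) :
    0 ≤ (X * X).trace.re := by
  simpa [hX.eq] using (RCLike.nonneg_iff.1 (posSemidef_conjTranspose_mul_self X).trace_nonneg).1

lemma IsHermitian.re_trace_mul_self_pos {X : Matrix n n ℂ} (hX : X.IsHermitian) (h : X ≠ 0) :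
    0 < (X * X).trace.re := by
  have hpos : 0 < (Xᴴ * X).trace :=
    (posSemidef_conjTranspose_mul_self X).trace_nonneg.lt_of_ne'
      (trace_conjTranspose_mul_self_eq_zero_iff.not.2 h)
  simpa [hX.eq] using (RCLike.pos_iff.1 hpos).1

lemma trace_realPart {X : Matrix n n ℂ} (hX : X.trace = 0) : (ℜ X : Matrix n n ℂ).trace = 0 := by
  rw [realPart_apply_coe, trace_smul, trace_add, star_eq_conjTranspose, trace_conjTranspose, hX,
    star_zero, add_zero, smul_zero]

lemma trace_imaginaryPart {X : Matrix n n ℂ} (hX : X.trace = 0) :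
    (ℑ X : Matrix n n ℂ).trace = 0 := by
  rw [imaginaryPart_apply_coe, trace_smul, trace_smul, trace_sub, star_eq_conjTranspose,
    trace_conjTranspose, hX, star_zero, sub_zero, smul_zero, smul_zero]

variable [DecidableEq n]

lemma trace_add_smul_one_mul_add_smul_one {X Y : Matrix n n ℂ} (hX : X.trace = 0)
    (hY : Y.trace = 0) (s t : ℂ) :
    ((X + s • 1) * (Y + t • 1)).trace = (X * Y).trace + s * t * Fintype.card n := by
  simp only [add_mul, mul_add, Matrix.smul_mul, Matrix.mul_smul, one_mul, mul_one, trace_add,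
    trace_smul, trace_one, hX, hY, smul_smul, smul_eq_mul]
  ring

lemma trace_mul_add_smul_one {ρ : Matrix n n ℂ} (hρ : ρ.trace = 1) (X : Matrix n n ℂ) (c : ℂ) :
    (ρ * (X + c • 1)).trace = (ρ * X).trace + c := by
  rw [mul_add, trace_add, Matrix.mul_smul, mul_one, trace_smul, hρ, smul_eq_mul, mul_one]

lemma exists_trace_shift_mul_shift_eq {B C : Matrix n n ℂ} (hB : B.IsHermitian)
    (hC : C.IsHermitian) (hBt : B.trace = 0) (hCt : C.trace = 0) (hBC : B ≠ 0 ∨ C ≠ 0) :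
    ∃ s t α : ℝ, 0 < α ∧ ((B + (s : ℂ) • 1) * (B + (s : ℂ) • 1)).trace = (α : ℂ) ^ 2 ∧
      ((C + (t : ℂ) • 1) * (C + (t : ℂ) • 1)).trace = (α : ℂ) ^ 2 ∧
      ((B + (s : ℂ) • 1) * (C + (t : ℂ) • 1)).trace = 0 := by
  have : Nonempty n := hBC.elim nonempty_of_ne nonempty_of_ne
  have hpos : 0 < (B * B).trace.re + (C * C).trace.re := by
    rcases hBC with h | h
    · exact add_pos_of_pos_of_nonneg (hB.re_trace_mul_self_pos h) hC.re_trace_mul_self_nonneg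
    · exact add_pos_of_nonneg_of_pos hB.re_trace_mul_self_nonneg (hC.re_trace_mul_self_pos h)
  obtain ⟨s, t, hα, hBC, horth⟩ := Real.exists_add_mul_sq_eq_add_mul_sq (d := (B * C).trace.re)
    (Nat.cast_pos.2 (Fintype.card_pos (α := n))) hpos
  have hα2 := Real.sq_sqrt hα.le
  refine ⟨s, t, _, Real.sqrt_pos.2 hα, ?_, ?_, ?_⟩
  · rw [trace_add_smul_one_mul_add_smul_one hBt hBt, ← hB.ofReal_re_trace_mul hB]
    exact_mod_cast (by linear_combination -hα2)
  · rw [trace_add_smul_one_mul_add_smul_one hCt hCt, ← hC.ofReal_re_trace_mul hC]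
    exact_mod_cast (by linear_combination -hα2 - hBC)
  · rw [trace_add_smul_one_mul_add_smul_one hBt hCt, ← hB.ofReal_re_trace_mul hC]
    exact_mod_cast (by linear_combination horth)

lemma exists_orthonormal_trace_mul_eq_of_trace_eq_zero {A : Matrix n n ℂ} (hA : A.trace = 0)
    (hA0 : A ≠ 0) :
    ∃ (V₁ V₂ : Matrix n n ℂ) (α : ℝ) (w : ℂ), V₁.IsHermitian ∧ V₂.IsHermitian ∧
      (V₁ * V₁).trace = 1 ∧ (V₂ * V₂).trace = 1 ∧ (V₁ * V₂).trace = 0 ∧ 0 < α ∧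
      ∀ ρ : Matrix n n ℂ, ρ.trace = 1 →
        (ρ * A).trace = α * ((ρ * V₁).trace + (ρ * V₂).trace * Complex.I) - w := by
  have hBC : (ℜ A : Matrix n n ℂ) ≠ 0 ∨ (ℑ A : Matrix n n ℂ) ≠ 0 := by
    by_contra! h
    rw [← realPart_add_I_smul_imaginaryPart A, h.1, h.2, smul_zero, add_zero] at hA0
    exact hA0 rfl
  obtain ⟨s, t, α, hα, h₁₁, h₂₂, h₁₂⟩ := exists_trace_shift_mul_shift_eq (ℜ A).2 (ℑ A).2
    (trace_realPart hA) (trace_imaginaryPart hA) hBC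
  have hα0 : (α : ℂ) ≠ 0 := by exact_mod_cast hα.ne'
  have hV : ∀ X : Matrix n n ℂ, X.IsHermitian → ∀ r : ℝ,
      (((α⁻¹ : ℝ) : ℂ) • (X + (r : ℂ) • 1)).IsHermitian := fun X hX r ↦
    (hX.add (isHermitian_one.smul (Complex.conj_ofReal r))).smul (Complex.conj_ofReal α⁻¹)
  refine ⟨_, _, α, s + t * Complex.I, hV _ (ℜ A).2 s, hV _ (ℑ A).2 t, ?_, ?_, ?_, hα,
    fun ρ hρ ↦ ?_⟩
  all_goals simp only [Matrix.smul_mul, Matrix.mul_smul, trace_smul, smul_eq_mul, h₁₁, h₂₂, h₁₂,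
    Complex.ofReal_inv]
  · field_simp
  · field_simp
  · simp
  · conv_lhs => rw [← realPart_add_I_smul_imaginaryPart A]
    rw [mul_add, trace_add, Matrix.mul_smul, trace_smul, smul_eq_mul, trace_mul_add_smul_one hρ,
      trace_mul_add_smul_one hρ]
    field_simp
    ring

theorem exists_orthonormal_trace_mul_eq {A : Matrix n n ℂ} (hA : ∀ c : ℂ, A ≠ c • 1) :
    ∃ (V₁ V₂ : Matrix n n ℂ) (α : ℝ) (w : ℂ), V₁.IsHermitian ∧ V₂.IsHermitian ∧
      (V₁ * V₁).trace = 1 ∧ (V₂ * V₂).trace = 1 ∧ (V₁ * V₂).trace = 0 ∧ 0 < α ∧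
      ∀ ρ : Matrix n n ℂ, ρ.trace = 1 →
        (ρ * A).trace = α * ((ρ * V₁).trace + (ρ * V₂).trace * Complex.I) - w := by
  have : Nonempty n := nonempty_of_ne (hA 0)
  have hn : (Fintype.card n : ℂ) ≠ 0 := Nat.cast_ne_zero.2 Fintype.card_ne_zero
  set c := A.trace / Fintype.card n
  have htr : (A - c • 1).trace = 0 := by
    rw [trace_sub, trace_smul, trace_one, smul_eq_mul, div_mul_cancel₀ _ hn, sub_self]
  obtain ⟨V₁, V₂, α, w, hV₁, hV₂, h₁₁, h₂₂, h₁₂, hα, hρ⟩ :=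
    exists_orthonormal_trace_mul_eq_of_trace_eq_zero htr (sub_ne_zero.2 (hA c))
  refine ⟨V₁, V₂, α, w - c, hV₁, hV₂, h₁₁, h₂₂, h₁₂, hα, fun ρ htrρ ↦ ?_⟩
  rw [← sub_add_cancel A (c • 1), trace_mul_add_smul_one htrρ, hρ ρ htrρ]
  ring

end Matrix

theorem stmt_5 {N : ℕ} (A : Matrix (Fin N) (Fin N) ℂ)
    (hA : ∀ c : ℂ, A ≠ c • (1 : Matrix (Fin N) (Fin N) ℂ)) :
    ∃ (V₁ V₂ : Matrix (Fin N) (Fin N) ℂ) (α : ℝ) (w : ℂ),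
      V₁.IsHermitian ∧ V₂.IsHermitian ∧
      (V₁ * V₁).trace = 1 ∧ (V₂ * V₂).trace = 1 ∧ (V₁ * V₂).trace = 0 ∧ 0 < α ∧
      numericalRange A =
        {z | ∃ ρ : Matrix (Fin N) (Fin N) ℂ,
          ρ.IsHermitian ∧ ρ.PosSemidef ∧ ρ.trace = 1 ∧
          z = (α : ℂ) * ((ρ * V₁).trace + (ρ * V₂).trace * Complex.I) - w} := by
  obtain ⟨V₁, V₂, α, w, hV₁, hV₂, h₁₁, h₂₂, h₁₂, hα, htrace⟩ :=
    Matrix.exists_orthonormal_trace_mul_eq hA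
  refine ⟨V₁, V₂, α, w, hV₁, hV₂, h₁₁, h₂₂, h₁₂, hα, ?_⟩
  change (toEuclideanLin A).numericalRange = _
  ext z
  rw [numericalRange_eq_image_densityMatrices]
  refine exists_congr fun ρ ↦ ⟨?_, ?_⟩
  · rintro ⟨⟨hρ, htr⟩, rfl⟩
    exact ⟨hρ.1, hρ, htr, htrace ρ htr⟩
  · rintro ⟨-, hρ, htr, rfl⟩
    exact ⟨⟨hρ, htr⟩, htrace ρ htr⟩
end
end

section
/- Let A be a 2×2 complex matrix with eigenvalues λ_1, λ_2. Then the numerical range W(A) is the closed elliptical disk (possibly degenerate) with focal points λ_1 and λ_2 and minor axis of length d = √(Tr(AA*) − |λ_1|^2 − |λ_2|^2); equivalently, W(A) = {z ∈ ℂ : |z − λ_1| + |z − λ_2| ≤ √(|λ_1 − λ_2|^2 + d^2)}. -/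
/-!
STATEMENT 12 (Murnaghan's elliptic range theorem): For a 2×2 complex matrix A
with eigenvalues λ₁, λ₂, the numerical range W(A) is the closed elliptical disk
with foci λ₁ and λ₂ and minor axis d = √(Tr(AA*) − |λ₁|² − |λ₂|²):
W(A) = {z : |z−λ₁| + |z−λ₂| ≤ √(|λ₁−λ₂|² + d²)}.
-/

open Matrix
open scoped InnerProductSpace

noncomputable section

/-!
Conjugating `A` by a unitary changes neither `W(A)` nor `Tr(AA*)`, and a unitary whose first
column is a unit eigenvector for `λ₁` makes `A` upper triangular, `[[λ₁, b], [0, λ₂]]`, with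
`|b|² = Tr(AA*) - |λ₁|² - |λ₂|²`. For a unit vector `(p, q)` the quadratic form of that matrix is
`m + x c + (b / 2) w`, where `m` and `c` are the midpoint and half-difference of the eigenvalues and
`(x, w) = (|p|² - |q|², 2 p̄ q)` is the Hopf map, which sends the unit sphere of `ℂ²` onto the unit
sphere `x² + |w|² = 1` of `ℝ × ℂ`. The image of that sphere under `(x, w) ↦ x c + β w` is the
ellipse with foci `±c` and major semi-axis `√(|c|² + |β|²)`: squaring the focal condition twice
turns it into a quadratic inequality in `z`, which says exactly that the quadratic equation
determining `x` has a real root.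
-/

open scoped ComplexConjugate

theorem add_le_iff_sq_add_sq_le {P Q A : ℝ} (hP : 0 ≤ P) (hQ : 0 ≤ Q) (hA : 0 ≤ A) :
    P + Q ≤ A ↔ P ^ 2 + Q ^ 2 ≤ A ^ 2 ∧ 4 * P ^ 2 * Q ^ 2 ≤ (A ^ 2 - P ^ 2 - Q ^ 2) ^ 2 := by
  rw [← sq_le_sq₀ (by positivity) hA]
  constructor
  · intro h
    have hPQ : 2 * (P * Q) ≤ A ^ 2 - P ^ 2 - Q ^ 2 := by linarith
    refine ⟨by nlinarith [mul_nonneg hP hQ], ?_⟩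
    nlinarith [mul_nonneg hP hQ, pow_le_pow_left₀ (by positivity) hPQ 2]
  · rintro ⟨h₁, h₂⟩
    have : 2 * (P * Q) ≤ A ^ 2 - P ^ 2 - Q ^ 2 :=
      (sq_le_sq₀ (by positivity) (by linarith)).1 (by linarith)
    linarith

section InnerProductSpace

variable {E : Type*} [NormedAddCommGroup E] [InnerProductSpace ℝ E]

theorem norm_sub_add_norm_add_le_two_mul_iff (c z : E) {a : ℝ} (ha : 0 ≤ a) :
    ‖z - c‖ + ‖z + c‖ ≤ 2 * a ↔
      ‖z‖ ^ 2 + ‖c‖ ^ 2 ≤ 2 * a ^ 2 ∧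
        a ^ 2 * ‖z‖ ^ 2 - ⟪c, z⟫_ℝ ^ 2 ≤ a ^ 2 * (a ^ 2 - ‖c‖ ^ 2) := by
  rw [add_le_iff_sq_add_sq_le (norm_nonneg _) (norm_nonneg _) (by positivity),
    norm_sub_sq_real, norm_add_sq_real, real_inner_comm]
  constructor <;> rintro ⟨h₁, h₂⟩ <;> constructor <;> nlinarith

theorem exists_eq_smul_of_norm_sq_mul_le_inner_sq (c z : E) (hz : ‖z‖ ≤ ‖c‖)
    (hcz : ‖c‖ ^ 2 * ‖z‖ ^ 2 ≤ ⟪c, z⟫_ℝ ^ 2) : ∃ x : ℝ, x ^ 2 ≤ 1 ∧ z = x • c := by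
  rcases eq_or_ne c 0 with rfl | hc
  · exact ⟨0, by norm_num, by simpa using hz⟩
  have hc' : 0 < ‖c‖ ^ 2 := by positivity
  set x := ⟪c, z⟫_ℝ / ‖c‖ ^ 2
  have hx : x * ‖c‖ ^ 2 = ⟪c, z⟫_ℝ := div_mul_cancel₀ _ hc'.ne'
  refine ⟨x, ?_, ?_⟩
  · have h₁ : ⟪c, z⟫_ℝ ^ 2 ≤ (‖c‖ * ‖z‖) ^ 2 :=
      sq_le_sq.2 ((abs_real_inner_le_norm c z).trans (le_abs_self _))
    have h₂ : (‖c‖ * ‖z‖) ^ 2 ≤ (‖c‖ ^ 2) ^ 2 := by gcongr; nlinarith [norm_nonneg z]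
    have h₃ : x ^ 2 * (‖c‖ ^ 2) ^ 2 ≤ 1 * (‖c‖ ^ 2) ^ 2 := by
      rw [← mul_pow, hx]; linarith
    exact le_of_mul_le_mul_right h₃ (by positivity)
  · have h : ‖z - x • c‖ ^ 2 ≤ 0 := by
      rw [norm_sub_sq_real, inner_smul_right, norm_smul, Real.norm_eq_abs, mul_pow, sq_abs,
        real_inner_comm]
      nlinarith
    rw [← sub_eq_zero, ← norm_eq_zero]
    exact pow_eq_zero_iff two_ne_zero |>.1 (le_antisymm h (sq_nonneg _))

end InnerProductSpace

namespace Complex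

theorem norm_sub_add_norm_add_le_of_sq_add_sq_eq_one {c β w : ℂ} {x : ℝ}
    (h : x ^ 2 + ‖w‖ ^ 2 = 1) :
    ‖x • c + β * w - c‖ + ‖x • c + β * w + c‖ ≤ 2 * √(‖c‖ ^ 2 + ‖β‖ ^ 2) := by
  have ha : √(‖c‖ ^ 2 + ‖β‖ ^ 2) ^ 2 = ‖c‖ ^ 2 + ‖β‖ ^ 2 := Real.sq_sqrt (by positivity)
  rw [norm_sub_add_norm_add_le_two_mul_iff _ _ (Real.sqrt_nonneg _), ha]
  have hz : ‖x • c + β * w‖ ^ 2 ≤ ‖c‖ ^ 2 + ‖β‖ ^ 2 :=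
    calc ‖x • c + β * w‖ ^ 2 ≤ (|x| * ‖c‖ + ‖β‖ * ‖w‖) ^ 2 := by
          gcongr
          simpa [norm_smul, norm_mul] using norm_add_le (x • c) (β * w)
      _ ≤ (x ^ 2 + ‖w‖ ^ 2) * (‖c‖ ^ 2 + ‖β‖ ^ 2) := by
          nlinarith [sq_nonneg (‖c‖ * ‖w‖ - ‖β‖ * |x|), sq_abs x]
      _ = ‖c‖ ^ 2 + ‖β‖ ^ 2 := by rw [h, one_mul]
  refine ⟨by linarith [sq_nonneg ‖β‖], ?_⟩
  have hz' : ‖x • c + β * w‖ ^ 2 =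
      x ^ 2 * ‖c‖ ^ 2 + 2 * x * ⟪c, β * w⟫_ℝ + ‖β‖ ^ 2 * ‖w‖ ^ 2 := by
    rw [norm_add_sq_real, real_inner_smul_left, norm_smul, norm_mul, Real.norm_eq_abs, mul_pow,
      mul_pow, sq_abs]
    ring
  have hcz : ⟪c, x • c + β * w⟫_ℝ = x * ‖c‖ ^ 2 + ⟪c, β * w⟫_ℝ := by
    rw [inner_add_right, real_inner_smul_right, real_inner_self_eq_norm_sq]
  rw [hcz, hz', show ‖w‖ ^ 2 = 1 - x ^ 2 by linarith]
  -- the two sides differ by exactly `(‖β‖² x - ⟪c, β w⟫)²`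
  nlinarith [sq_nonneg (‖β‖ ^ 2 * x - ⟪c, β * w⟫_ℝ)]

theorem exists_smul_add_mul_of_norm_sub_add_norm_add_le {c β z : ℂ}
    (h : ‖z - c‖ + ‖z + c‖ ≤ 2 * √(‖c‖ ^ 2 + ‖β‖ ^ 2)) :
    ∃ (x : ℝ) (w : ℂ), x ^ 2 + ‖w‖ ^ 2 = 1 ∧ z = x • c + β * w := by
  have ha : √(‖c‖ ^ 2 + ‖β‖ ^ 2) ^ 2 = ‖c‖ ^ 2 + ‖β‖ ^ 2 := Real.sq_sqrt (by positivity)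
  obtain ⟨h₁, h₂⟩ := (norm_sub_add_norm_add_le_two_mul_iff c z (Real.sqrt_nonneg _)).1 h
  rw [ha] at h₁ h₂
  rcases eq_or_ne β 0 with rfl | hβ
  · simp only [norm_zero, ne_eq, OfNat.ofNat_ne_zero, not_false_eq_true, zero_pow, add_zero,
      sub_self, mul_zero, sub_nonpos] at h₁ h₂
    obtain ⟨x, hx, rfl⟩ := exists_eq_smul_of_norm_sq_mul_le_inner_sq c z
      (by nlinarith [norm_nonneg z, norm_nonneg c]) h₂
    refine ⟨x, √(1 - x ^ 2), ?_, by simp⟩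
    rw [norm_real, Real.norm_eq_abs, sq_abs, Real.sq_sqrt (by linarith)]
    ring
  -- `x` is a root of `t ↦ ‖z - t • c‖² - ‖β‖² (1 - t²)`, whose discriminant is nonnegative by `h₂`
  obtain ⟨x, hx⟩ : ∃ x : ℝ, (‖c‖ ^ 2 + ‖β‖ ^ 2) * (x * x) + (-2 * ⟪c, z⟫_ℝ) * x
      + (‖z‖ ^ 2 - ‖β‖ ^ 2) = 0 := by
    refine exists_quadratic_eq_zero (by positivity) ⟨√(discrim (‖c‖ ^ 2 + ‖β‖ ^ 2)
      (-2 * ⟪c, z⟫_ℝ) (‖z‖ ^ 2 - ‖β‖ ^ 2)), ?_⟩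
    rw [← sq, Real.sq_sqrt (by rw [discrim]; nlinarith)]
  refine ⟨x, (z - x • c) / β, ?_, by field_simp; ring⟩
  rw [norm_div, div_pow, norm_sub_sq_real, real_inner_smul_right, norm_smul, Real.norm_eq_abs,
    mul_pow, sq_abs, real_inner_comm]
  field_simp
  linarith

theorem exists_smul_add_mul_iff (c β z : ℂ) :
    (∃ (x : ℝ) (w : ℂ), x ^ 2 + ‖w‖ ^ 2 = 1 ∧ z = x • c + β * w) ↔
      ‖z - c‖ + ‖z + c‖ ≤ 2 * √(‖c‖ ^ 2 + ‖β‖ ^ 2) := by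
  constructor
  · rintro ⟨x, w, h, rfl⟩
    exact norm_sub_add_norm_add_le_of_sq_add_sq_eq_one h
  · exact exists_smul_add_mul_of_norm_sub_add_norm_add_le

theorem exists_hopf_eq_iff {x : ℝ} {w : ℂ} :
    (∃ p q : ℂ, ‖p‖ ^ 2 + ‖q‖ ^ 2 = 1 ∧ ‖p‖ ^ 2 - ‖q‖ ^ 2 = x ∧ 2 * (conj p * q) = w) ↔
      x ^ 2 + ‖w‖ ^ 2 = 1 := by
  constructor
  · rintro ⟨p, q, h, rfl, rfl⟩
    calc _ = (‖p‖ ^ 2 + ‖q‖ ^ 2) ^ 2 := by simp; ring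
      _ = 1 := by rw [h, one_pow]
  intro h
  have hx : -1 ≤ x := by nlinarith [norm_nonneg w]
  rcases hx.eq_or_lt with rfl | hx
  · have hw : w = 0 := by simpa using h
    exact ⟨0, 1, by simp, by simp, by simp [hw]⟩
  set r := √((1 + x) / 2)
  have hr : 0 < r := Real.sqrt_pos.2 (by linarith)
  have hr2 : r ^ 2 = (1 + x) / 2 := Real.sq_sqrt (by linarith)
  have hw : ‖w‖ ^ 2 = 2 * r ^ 2 * (1 - x) := by rw [hr2]; linarith
  have hq : ‖w / (2 * r)‖ ^ 2 = (1 - x) / 2 := by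
    simp only [norm_div, norm_mul, norm_real, Real.norm_eq_abs, abs_of_pos hr, norm_ofNat,
      div_pow, mul_pow, hw]
    field_simp
  refine ⟨r, w / (2 * r), ?_, ?_, ?_⟩
  · rw [hq, norm_real, Real.norm_eq_abs, sq_abs, hr2]; ring
  · rw [hq, norm_real, Real.norm_eq_abs, sq_abs, hr2]; ring
  · rw [conj_ofReal]
    field_simp
    exact mul_div_cancel_left₀ w (ofReal_ne_zero.2 hr.ne')

end Complex

theorem mem_numericalRange_fin_two {A : Matrix (Fin 2) (Fin 2) ℂ} {z : ℂ} :
    z ∈ numericalRange A ↔ ∃ p q : ℂ, ‖p‖ ^ 2 + ‖q‖ ^ 2 = 1 ∧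
      z = conj p * (A 0 0 * p + A 0 1 * q) + conj q * (A 1 0 * p + A 1 1 * q) := by
  have hnorm (ψ : EuclideanSpace ℂ (Fin 2)) : ‖ψ‖ = 1 ↔ ‖ψ 0‖ ^ 2 + ‖ψ 1‖ ^ 2 = 1 := by
    rw [← Fin.sum_univ_two (fun i => ‖ψ i‖ ^ 2), ← EuclideanSpace.norm_sq_eq,
      pow_eq_one_iff_of_nonneg (norm_nonneg _) two_ne_zero]
  have hinner (ψ : EuclideanSpace ℂ (Fin 2)) : ⟪ψ, toEuclideanLin A ψ⟫_ℂ =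
      conj (ψ 0) * (A 0 0 * ψ 0 + A 0 1 * ψ 1) + conj (ψ 1) * (A 1 0 * ψ 0 + A 1 1 * ψ 1) := by
    simp [PiLp.inner_apply, Fin.sum_univ_two, mulVec, dotProduct, mul_comm]
  constructor
  · rintro ⟨ψ, hψ, rfl⟩
    exact ⟨ψ 0, ψ 1, (hnorm ψ).1 hψ, hinner ψ⟩
  · rintro ⟨p, q, h, rfl⟩
    exact ⟨!₂[p, q], (hnorm _).2 h, by rw [hinner]; rfl⟩

theorem numericalRange_upperTriangular_fin_two (l₁ l₂ b : ℂ) :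
    numericalRange !![l₁, b; 0, l₂] =
      {z | ‖z - l₁‖ + ‖z - l₂‖ ≤ √(‖l₁ - l₂‖ ^ 2 + ‖b‖ ^ 2)} := by
  set m := (l₁ + l₂) / 2
  set c := (l₁ - l₂) / 2
  have hform (p q : ℂ) (h : ‖p‖ ^ 2 + ‖q‖ ^ 2 = 1) :
      conj p * (l₁ * p + b * q) + conj q * (0 * p + l₂ * q) - m =
        (‖p‖ ^ 2 - ‖q‖ ^ 2) • c + b / 2 * (2 * (conj p * q)) := by
    have hC : (‖p‖ : ℂ) ^ 2 + (‖q‖ : ℂ) ^ 2 = 1 := by exact_mod_cast h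
    rw [Complex.real_smul]
    push_cast
    linear_combination l₁ * Complex.conj_mul' p + l₂ * Complex.conj_mul' q + m * hC
  have hrad : √(‖l₁ - l₂‖ ^ 2 + ‖b‖ ^ 2) = 2 * √(‖c‖ ^ 2 + ‖b / 2‖ ^ 2) := by
    rw [← abs_two, ← Real.sqrt_sq_eq_abs, ← Real.sqrt_mul (by positivity)]
    congr 1
    simp only [c, norm_div, Complex.norm_ofNat]
    ring
  ext z
  rw [mem_numericalRange_fin_two, Set.mem_ofPred_eq, hrad,
    show z - l₁ = z - m - c by ring, show z - l₂ = z - m + c by ring,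
    ← Complex.exists_smul_add_mul_iff]
  simp only [of_apply, cons_val', cons_val_zero, cons_val_one, empty_val', cons_val_fin_one]
  constructor
  · rintro ⟨p, q, h, rfl⟩
    exact ⟨_, _, Complex.exists_hopf_eq_iff.1 ⟨p, q, h, rfl, rfl⟩, hform p q h⟩
  · rintro ⟨x, w, hxw, hz⟩
    obtain ⟨p, q, h, rfl, rfl⟩ := Complex.exists_hopf_eq_iff.2 hxw
    exact ⟨p, q, h, by rw [← hform p q h] at hz; linear_combination hz⟩

theorem numericalRange_unitary_conj {N : ℕ} (A : Matrix (Fin N) (Fin N) ℂ)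
    {U : Matrix (Fin N) (Fin N) ℂ} (hU : U ∈ unitaryGroup (Fin N) ℂ) :
    numericalRange (star U * A * U) = numericalRange A := by
  set u := toEuclideanCLM (𝕜 := ℂ) U
  have hu : u ∈ unitary _ := Unitary.map_mem _ hU
  have hform (φ : EuclideanSpace ℂ (Fin N)) :
      ⟪φ, toEuclideanLin (star U * A * U) φ⟫_ℂ = ⟪u φ, toEuclideanLin A (u φ)⟫_ℂ := by
    change ⟪φ, toEuclideanCLM (𝕜 := ℂ) (star U * A * U) φ⟫_ℂ =
      ⟪u φ, toEuclideanCLM (𝕜 := ℂ) A (u φ)⟫_ℂ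
    rw [map_mul, map_mul, map_star, ContinuousLinearMap.star_eq_adjoint]
    simp only [mul_apply_eq_comp]
    exact ContinuousLinearMap.adjoint_inner_right _ _ _
  ext z
  constructor
  · rintro ⟨φ, hφ, rfl⟩
    exact ⟨u φ, by rw [ContinuousLinearMap.norm_map_of_mem_unitary hu, hφ], hform φ⟩
  · rintro ⟨ψ, hψ, rfl⟩
    refine ⟨star u ψ, ?_, ?_⟩
    · rw [ContinuousLinearMap.norm_map_of_mem_unitary (Unitary.star_mem hu), hψ]
    · rw [hform, ← mul_apply_eq_comp, Unitary.mul_star_self_of_mem hu, one_apply_eq_self]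

section UnitaryConj

variable {n R : Type*} [Fintype n] [DecidableEq n] [CommRing R] [StarRing R]
  (A : Matrix n n R) {U : Matrix n n R}

theorem charpoly_unitary_conj (hU : U ∈ unitaryGroup n R) :
    (star U * A * U).charpoly = A.charpoly := by
  rw [charpoly_mul_comm, ← Matrix.mul_assoc, Unitary.mul_star_self_of_mem hU, Matrix.one_mul]

theorem trace_mul_conjTranspose_unitary_conj (hU : U ∈ unitaryGroup n R) :
    (star U * A * U * (star U * A * U)ᴴ).trace = (A * Aᴴ).trace := by
  have hUU := Unitary.mul_star_self_of_mem hU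
  rw [star_eq_conjTranspose] at hUU ⊢
  simp only [conjTranspose_mul, conjTranspose_conjTranspose, Matrix.mul_assoc]
  rw [← Matrix.mul_assoc U, hUU, Matrix.one_mul, trace_mul_comm, Matrix.mul_assoc,
    Matrix.mul_assoc, hUU, Matrix.mul_one]

end UnitaryConj

open Polynomial in
theorem charpoly_upperTriangular_fin_two (l b μ : ℂ) :
    (!![l, b; 0, μ]).charpoly = (X - C l) * (X - C μ) := by
  rw [charpoly_fin_two, trace_fin_two, det_fin_two]
  simp only [of_apply, cons_val', cons_val_zero, cons_val_one, empty_val', cons_val_fin_one,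
    mul_zero, sub_zero, map_add, map_mul]
  ring

theorem re_trace_mul_conjTranspose_upperTriangular_fin_two (l b μ : ℂ) :
    (!![l, b; 0, μ] * (!![l, b; 0, μ])ᴴ).trace.re = ‖l‖ ^ 2 + ‖b‖ ^ 2 + ‖μ‖ ^ 2 := by
  simp [trace_fin_two, vecMul, dotProduct, Fin.sum_univ_two, Complex.mul_conj,
    Complex.normSq_eq_norm_sq, -Complex.ofReal_pow]

theorem exists_unit_eigenvector_fin_two {A : Matrix (Fin 2) (Fin 2) ℂ} {l : ℂ}
    (hl : A.charpoly.IsRoot l) : ∃ α γ : ℂ, ‖α‖ ^ 2 + ‖γ‖ ^ 2 = 1 ∧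
      A 0 0 * α + A 0 1 * γ = l * α ∧ A 1 0 * α + A 1 1 * γ = l * γ := by
  rw [← charpoly_toLin', ← Module.End.hasEigenvalue_iff_isRoot_charpoly] at hl
  obtain ⟨v, hv⟩ := hl.exists_hasEigenvector
  have h₀ : A 0 0 * v 0 + A 0 1 * v 1 = l * v 0 := by
    simpa [mulVec, dotProduct, Fin.sum_univ_two] using congrFun hv.apply_eq_smul 0
  have h₁ : A 1 0 * v 0 + A 1 1 * v 1 = l * v 1 := by
    simpa [mulVec, dotProduct, Fin.sum_univ_two] using congrFun hv.apply_eq_smul 1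
  set s := ‖(WithLp.toLp 2 v : EuclideanSpace ℂ (Fin 2))‖
  have hs : 0 < s := norm_pos_iff.2 (by simpa using hv.2)
  have hs2 : s ^ 2 = ‖v 0‖ ^ 2 + ‖v 1‖ ^ 2 := by
    simp [s, EuclideanSpace.norm_sq_eq, Fin.sum_univ_two]
  have hsC : (s : ℂ) ≠ 0 := Complex.ofReal_ne_zero.2 hs.ne'
  refine ⟨v 0 / s, v 1 / s, ?_, ?_, ?_⟩
  · simp only [norm_div, Complex.norm_real, Real.norm_eq_abs, abs_of_pos hs, div_pow]
    field_simp
    linarith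
  · field_simp
    linear_combination h₀
  · field_simp
    linear_combination h₁

theorem mem_unitaryGroup_fin_two {α γ : ℂ} (h : conj α * α + conj γ * γ = 1) :
    !![α, -conj γ; γ, conj α] ∈ unitaryGroup (Fin 2) ℂ := by
  rw [mem_unitaryGroup_iff']
  ext i j
  fin_cases i <;> fin_cases j <;> simp [mul_apply, Fin.sum_univ_two, mul_comm] <;>
    linear_combination h

theorem exists_unitary_conj_eq_upperTriangular_fin_two {A : Matrix (Fin 2) (Fin 2) ℂ} {l : ℂ}
    (hl : A.charpoly.IsRoot l) :
    ∃ U ∈ unitaryGroup (Fin 2) ℂ, ∃ b μ : ℂ, star U * A * U = !![l, b; 0, μ] := by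
  obtain ⟨α, γ, h, h₀, h₁⟩ := exists_unit_eigenvector_fin_two hl
  have h' : conj α * α + conj γ * γ = 1 := by
    rw [Complex.conj_mul', Complex.conj_mul']; exact_mod_cast h
  set U := !![α, -conj γ; γ, conj α]
  have e₀₀ : (star U * A * U) 0 0 = l := by
    simp only [U, mul_apply, Fin.sum_univ_two, star_apply, of_apply, cons_val', cons_val_zero,
      cons_val_one, cons_val_fin_one, RCLike.star_def]
    linear_combination conj α * h₀ + conj γ * h₁ + l * h'
  have e₁₀ : (star U * A * U) 1 0 = 0 := by
    simp only [U, mul_apply, Fin.sum_univ_two, star_apply, of_apply, cons_val', cons_val_zero,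
      cons_val_one, cons_val_fin_one, RCLike.star_def, map_neg, Complex.conj_conj]
    linear_combination -γ * h₀ + α * h₁
  refine ⟨U, mem_unitaryGroup_fin_two h', (star U * A * U) 0 1, (star U * A * U) 1 1, ?_⟩
  conv_lhs => rw [eta_fin_two (star U * A * U), e₀₀, e₁₀]

theorem stmt_12 (A : Matrix (Fin 2) (Fin 2) ℂ) (lam₁ lam₂ : ℂ)
    (hspec : A.charpoly =
      (Polynomial.X - Polynomial.C lam₁) * (Polynomial.X - Polynomial.C lam₂)) :
    numericalRange A =
      {z : ℂ | ‖z - lam₁‖ + ‖z - lam₂‖ ≤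
        Real.sqrt (‖lam₁ - lam₂‖ ^ 2 +
          ((A * Aᴴ).trace.re - ‖lam₁‖ ^ 2 - ‖lam₂‖ ^ 2))} := by
  obtain ⟨U, hU, b, μ, hT⟩ := exists_unitary_conj_eq_upperTriangular_fin_two
    (hspec ▸ Polynomial.root_mul_right_of_isRoot _ (Polynomial.root_X_sub_C.2 rfl))
  have hμ : μ = lam₂ := by
    have h := charpoly_unitary_conj A hU
    rw [hT, charpoly_upperTriangular_fin_two, hspec] at h
    simpa using mul_left_cancel₀ (Polynomial.X_sub_C_ne_zero lam₁) h
  rw [hμ] at hT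
  have htr := trace_mul_conjTranspose_unitary_conj A hU
  rw [hT] at htr
  rw [← numericalRange_unitary_conj A hU, hT, numericalRange_upperTriangular_fin_two, ← htr,
    re_trace_mul_conjTranspose_upperTriangular_fin_two,
    show ‖lam₁‖ ^ 2 + ‖b‖ ^ 2 + ‖lam₂‖ ^ 2 - ‖lam₁‖ ^ 2 - ‖lam₂‖ ^ 2 = ‖b‖ ^ 2 by ring]
end
end
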